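/- Let β : ℝ → [0,∞) be bounded, even, integrable, decreasing on [0,∞), and satisfy β(2^j x) ≤ 2^{4−j} β(x) for all |x| ≥ 1 and all integers j ≥ 0. Then for every integer k ≥ 0 there is a constant C = C(k, β) such that for every family {I_{rl}}_{(r,l)∈S'} of dyadic intervals with pairwise disjoint interiors in which every index satisfies r ≥ 0, one has ∫_ℝ β(t) ( Σ_{(r,l)∈S'} β(2^r t − l) )^k dt ≤ C. -/

import Mathlib

/-!
Write `a_q = 2^{-r} l` for the left end of `I_q`, `q = (r, l)`. A term `β(2^r (t - a_q))` with
`|t - a_q| ≥ 1` is at most `2^{4-r} β(t - a_q)`; comparing it with the integral of `β((t - s)/2)`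
over `I_q` shows that these far terms sum to at most `32 ∫ β`, because the `I_q` are disjoint.
A term with `|t - a_q| < 1` is at most `c(r - ρ)` on the window `|t - a_q| < 2^{-ρ}`, for some
`0 ≤ ρ ≤ r`, where `c(0) = β(0)`, `c(d) = β(2^{d-1})` and `Σ_d c(d) 2^d ≤ β(0) + 4 ∫ β`.
Let `W_ρ` be the sum of these window terms at scale `ρ` and `T_{ρ₀} = Σ_{ρ ≥ ρ₀} W_ρ`. From
`T_{ρ₀}^{j+1} ≤ 2^j Σ_{ρ ≥ ρ₀} W_ρ T_ρ^j` one proves by induction on `j` that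
`∫_{|t - x| < 2^{-ρ₀}} T_{ρ₀}^j ≤ K_j 2^{-ρ₀}`: a window of scale `ρ ≥ ρ₀` meeting that ball puts
`I_q` inside the ball tripled, and by the induction hypothesis at `(ρ, a_q)` it contributes
`c(r - ρ) 2^{r - ρ} |I_q|` up to `K_j`, so disjointness bounds the total. Finally `β ≤ c(d)` on
`|t| < 2^d` and `T_0 ≤ T_{-d}` give `∫ β T_0^k ≤ K_k Σ_d c(d) 2^d`.
-/

open MeasureTheory Set Filter
open scoped ENNReal Topology

noncomputable section

/-- The dyadic interval `I_{rl} = [2^{-r} l, 2^{-r}(l+1)]`. -/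
def Idy (r l : ℤ) : Set ℝ := Icc ((2 : ℝ) ^ (-r) * l) ((2 : ℝ) ^ (-r) * (l + 1))

def BetaHyp (β : ℝ → ℝ) : Prop :=
  (∀ x, 0 ≤ β x) ∧ (∃ M : ℝ, ∀ x, β x ≤ M) ∧ (∀ x, β (-x) = β x) ∧
  Integrable β volume ∧ AntitoneOn β (Ici 0) ∧
  (∀ (j : ℕ) (x : ℝ), 1 ≤ |x| → β ((2 : ℝ) ^ j * x) ≤ (2 : ℝ) ^ ((4 : ℤ) - j) * β x)

open Metric

theorem ENNReal.add_pow_le_two_pow_mul (a b : ℝ≥0∞) (n : ℕ) :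
    (a + b) ^ n ≤ 2 ^ n * (a ^ n + b ^ n) := by
  rcases le_total a b with h | h
  · calc (a + b) ^ n ≤ (2 * b) ^ n := by rw [two_mul]; gcongr
      _ ≤ 2 ^ n * (a ^ n + b ^ n) := by rw [mul_pow]; gcongr; exact le_add_self
  · calc (a + b) ^ n ≤ (2 * a) ^ n := by rw [two_mul]; gcongr
      _ ≤ 2 ^ n * (a ^ n + b ^ n) := by rw [mul_pow]; gcongr; exact le_self_add

theorem tsum_mul_tail_pow_mul_tsum_le {ι : Type*} [LinearOrder ι] (x : ι → ℝ≥0∞) (m : ℕ) :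
    (∑' i, x i * (∑' j : Ici i, x j) ^ m) * ∑' i, x i ≤
      2 * ∑' i, x i * (∑' j : Ici i, x j) ^ (m + 1) := by
  set T := fun i => ∑' j : Ici i, x j.1
  have hT : Antitone T := fun i i' h => ENNReal.tsum_mono_subtype x (Ici_subset_Ici.2 h)
  set F := fun i j => x i * T i ^ m * (Ici i).indicator x j
  have hF : ∀ i, ∑' j, F i j = x i * T i ^ (m + 1) := fun i => by
    rw [ENNReal.tsum_mul_left, ← tsum_subtype, pow_succ, mul_assoc]
  -- each pair `(i, j)` is charged to its smaller index
  have hpair : ∀ i j, x i * T i ^ m * x j ≤ F i j + F j i := by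
    intro i j
    rcases le_total i j with h | h
    · calc x i * T i ^ m * x j = F i j := by simp only [F, indicator_of_mem (mem_Ici.2 h)]
        _ ≤ F i j + F j i := le_self_add
    · calc x i * T i ^ m * x j ≤ x i * T j ^ m * x j := by gcongr; exact hT h
        _ = F j i := by simp only [F, indicator_of_mem (mem_Ici.2 h)]; ring
        _ ≤ F i j + F j i := le_add_self
  calc (∑' i, x i * T i ^ m) * ∑' j, x j = ∑' i, ∑' j, x i * T i ^ m * x j := by
        rw [← ENNReal.tsum_mul_right]; simp only [ENNReal.tsum_mul_left]
    _ ≤ ∑' i, ∑' j, (F i j + F j i) :=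
        ENNReal.tsum_le_tsum fun i => ENNReal.tsum_le_tsum (hpair i)
    _ = 2 * ∑' i, x i * T i ^ (m + 1) := by
        simp only [ENNReal.tsum_add]
        rw [ENNReal.tsum_comm (f := fun i j => F j i), ← two_mul]
        simp only [hF]

theorem tsum_pow_succ_le_two_pow_mul_tsum_mul_tail_pow {ι : Type*} [LinearOrder ι]
    (x : ι → ℝ≥0∞) (m : ℕ) :
    (∑' i, x i) ^ (m + 1) ≤ 2 ^ m * ∑' i, x i * (∑' j : Ici i, x j) ^ m := by
  induction m with
  | zero => simp
  | succ m ih =>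
    calc (∑' i, x i) ^ (m + 1 + 1) = (∑' i, x i) ^ (m + 1) * ∑' i, x i := pow_succ _ _
      _ ≤ 2 ^ m * (∑' i, x i * (∑' j : Ici i, x j) ^ m) * ∑' i, x i := by gcongr
      _ ≤ 2 ^ m * (2 * ∑' i, x i * (∑' j : Ici i, x j) ^ (m + 1)) := by
        rw [mul_assoc]; gcongr 2 ^ m * ?_; exact tsum_mul_tail_pow_mul_tsum_le x m
      _ = 2 ^ (m + 1) * ∑' i, x i * (∑' j : Ici i, x j) ^ (m + 1) := by ring

theorem tsum_setLIntegral_le_lintegral {α ι : Type*} [MeasurableSpace α] [Countable ι]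
    {μ : Measure α} {A : ι → Set α} (hA : ∀ i, MeasurableSet (A i))
    (hd : Pairwise (Function.onFun Disjoint A)) (f : α → ℝ≥0∞) :
    ∑' i, ∫⁻ x in A i, f x ∂μ ≤ ∫⁻ x, f x ∂μ := by
  rw [← lintegral_iUnion hA hd]
  exact setLIntegral_le_lintegral _ _

theorem mul_volume_Ico_le_setLIntegral {f : ℝ → ℝ≥0∞} {x y : ℝ} (hf : AntitoneOn f (Icc x y)) :
    f y * volume (Ico x y) ≤ ∫⁻ s in Ico x y, f s := by
  rw [← setLIntegral_const]
  exact setLIntegral_mono' measurableSet_Ico fun s hs =>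
    hf ⟨hs.1, hs.2.le⟩ ⟨hs.1.trans hs.2.le, le_rfl⟩ hs.2.le

theorem lintegral_comp_sub_div_two {f : ℝ → ℝ≥0∞} (hf : Measurable f) (t : ℝ) :
    ∫⁻ s, f ((t - s) / 2) = 2 * ∫⁻ s, f s := by
  rw [lintegral_sub_left_eq_self (fun s => f (s / 2)) t]
  simp_rw [div_eq_inv_mul]
  rw [← lintegral_map hf (measurable_const_mul _), Real.map_volume_mul_left (by norm_num),
    lintegral_smul_measure]
  norm_num

def scaleCoeff (f : ℝ → ℝ≥0∞) (d : ℤ) : ℝ≥0∞ :=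
  if d < 0 then 0 else if d = 0 then f 0 else f (2 ^ (d - 1))

theorem scaleCoeff_of_neg (f : ℝ → ℝ≥0∞) {d : ℤ} (hd : d < 0) : scaleCoeff f d = 0 := if_pos hd

theorem exists_dyadic_shell {f : ℝ → ℝ≥0∞} (hf : ∀ ⦃u v : ℝ⦄, |u| ≤ |v| → f v ≤ f u) (v : ℝ) :
    ∃ d : ℤ, 0 ≤ d ∧ |v| < 2 ^ d ∧ (∀ e : ℤ, 0 ≤ e → |v| < 2 ^ e → d ≤ e) ∧
      f v ≤ scaleCoeff f d := by
  rcases lt_or_ge |v| 1 with hv | hv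
  · exact ⟨0, le_rfl, by simpa using hv, fun e he _ => he, by simpa [scaleCoeff] using hf (by simp)⟩
  · set e₀ := Int.log 2 |v|
    have hlow : (2 : ℝ) ^ e₀ ≤ |v| := by
      simpa using Int.zpow_log_le_self (b := 2) one_lt_two (by linarith)
    have hup : |v| < 2 ^ (e₀ + 1) := by
      simpa using Int.lt_zpow_succ_log_self (b := 2) one_lt_two |v|
    have he₀ : 0 ≤ e₀ := by
      by_contra! h
      have : (2 : ℝ) ^ (e₀ + 1) ≤ 1 := zpow_le_one_of_nonpos₀ one_le_two (by omega)
      linarith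
    refine ⟨e₀ + 1, by omega, hup, fun e _ hve => ?_, ?_⟩
    · have := (zpow_lt_zpow_iff_right₀ one_lt_two).1 (hlow.trans_lt hve)
      omega
    · rw [scaleCoeff, if_neg (by omega), if_neg (by omega), add_sub_cancel_right]
      exact hf (by rwa [abs_of_pos (zpow_pos two_pos _)])

theorem tsum_scaleCoeff_mul_le {f : ℝ → ℝ≥0∞} (hf : AntitoneOn f (Ici 0)) :
    ∑' d, scaleCoeff f d * ENNReal.ofReal (2 ^ d) ≤ f 0 + 4 * ∫⁻ s, f s := by
  have hterm : ∀ d : ℤ, scaleCoeff f d * ENNReal.ofReal (2 ^ d) ≤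
      (if d = 0 then f 0 else 0) + 4 * ∫⁻ s in Ico (2 ^ (d - 2)) (2 ^ (d - 1)), f s := by
    intro d
    rcases lt_trichotomy d 0 with hd | rfl | hd
    · simp [scaleCoeff_of_neg f hd]
    · simp [scaleCoeff]
    have hpiece := mul_volume_Ico_le_setLIntegral (f := f) (x := 2 ^ (d - 2)) (y := 2 ^ (d - 1))
      (hf.mono fun s hs => (zpow_pos two_pos _).le.trans hs.1)
    have hlen : (2 : ℝ) ^ (d - 1) - 2 ^ (d - 2) = 2 ^ (d - 2) := by
      rw [show d - 1 = d - 2 + 1 by ring, zpow_add_one₀ two_ne_zero]; ring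
    have hpow : (2 : ℝ) ^ d = 4 * 2 ^ (d - 2) := by
      rw [show d = d - 2 + 2 by ring, zpow_add₀ two_ne_zero]; norm_num; ring
    rw [Real.volume_Ico, hlen] at hpiece
    rw [scaleCoeff, if_neg (by omega), if_neg hd.ne', if_neg hd.ne', zero_add, hpow,
      ENNReal.ofReal_mul (by norm_num), ENNReal.ofReal_ofNat, mul_left_comm]
    gcongr
  have hdisj : Pairwise (Function.onFun Disjoint
      fun d : ℤ => Ico ((2 : ℝ) ^ (d - 2)) (2 ^ (d - 1))) := by
    have := Monotone.pairwise_disjoint_on_Ico_succ (f := fun d : ℤ => (2 : ℝ) ^ (d - 2))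
      fun a b h => zpow_le_zpow_right₀ one_le_two (by omega)
    convert this using 4 with d
    simp only [Order.succ_eq_add_one]; ring_nf
  calc ∑' d, scaleCoeff f d * ENNReal.ofReal (2 ^ d)
      ≤ ∑' d : ℤ, ((if d = 0 then f 0 else 0) +
          4 * ∫⁻ s in Ico (2 ^ (d - 2)) (2 ^ (d - 1)), f s) := ENNReal.tsum_le_tsum hterm
    _ = f 0 + 4 * ∑' d : ℤ, ∫⁻ s in Ico (2 ^ (d - 2)) (2 ^ (d - 1)), f s := by
        rw [ENNReal.tsum_add, tsum_ite_eq, ENNReal.tsum_mul_left]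
    _ ≤ f 0 + 4 * ∫⁻ s, f s := by
        gcongr
        exact tsum_setLIntegral_le_lintegral (fun _ => measurableSet_Ico) hdisj f

theorem lintegral_mul_le_of_setLIntegral_ball_le {f g : ℝ → ℝ≥0∞} {c : ℤ → ℝ≥0∞}
    (hg : Measurable g) (hfc : ∀ t, ∃ d, 0 ≤ d ∧ |t| < 2 ^ d ∧ f t ≤ c d) {K : ℝ≥0∞}
    (hK : ∀ d : ℤ, 0 ≤ d → ∫⁻ t in ball 0 (2 ^ d), g t ≤ K * ENNReal.ofReal (2 ^ d)) :
    ∫⁻ t, f t * g t ≤ K * ∑' d, c d * ENNReal.ofReal (2 ^ d) := by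
  have hgd : ∀ d : ℤ, Measurable ((ball (0 : ℝ) (2 ^ d)).indicator g) :=
    fun d => hg.indicator measurableSet_ball
  have hpt : ∀ t, f t * g t ≤ ∑' d : Ici (0 : ℤ), c d * (ball 0 (2 ^ (d : ℤ))).indicator g t := by
    intro t
    obtain ⟨d, hd, ht, hfd⟩ := hfc t
    calc f t * g t ≤ c d * (ball 0 (2 ^ d)).indicator g t := by
          rw [indicator_of_mem (by simpa using ht)]; gcongr
      _ ≤ _ := ENNReal.le_tsum (⟨d, hd⟩ : Ici (0 : ℤ))
  calc ∫⁻ t, f t * g t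
      ≤ ∫⁻ t, ∑' d : Ici (0 : ℤ), c d * (ball 0 (2 ^ (d : ℤ))).indicator g t := lintegral_mono hpt
    _ = ∑' d : Ici (0 : ℤ), c d * ∫⁻ t in ball 0 (2 ^ (d : ℤ)), g t := by
        rw [lintegral_tsum fun d : Ici (0 : ℤ) => ((hgd d).const_mul _).aemeasurable]
        simp only [lintegral_const_mul _ (hgd _), lintegral_indicator measurableSet_ball]
    _ ≤ ∑' d : Ici (0 : ℤ), c d * (K * ENNReal.ofReal (2 ^ (d : ℤ))) :=
        ENNReal.tsum_le_tsum fun d => by gcongr; exact hK d d.2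
    _ ≤ ∑' d, c d * (K * ENNReal.ofReal (2 ^ d)) :=
        ENNReal.tsum_comp_le_tsum_of_injective Subtype.val_injective _
    _ = K * ∑' d, c d * ENNReal.ofReal (2 ^ d) := by
        rw [← ENNReal.tsum_mul_left]; simp only [mul_left_comm]

def dyadicLeft (q : ℤ × ℤ) : ℝ := 2 ^ (-q.1) * q.2

theorem interior_Idy (q : ℤ × ℤ) :
    interior (Idy q.1 q.2) = Ioo (dyadicLeft q) (dyadicLeft q + 2 ^ (-q.1)) := by
  rw [Idy, interior_Icc, dyadicLeft, mul_add, mul_one]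

theorem volume_interior_Idy (q : ℤ × ℤ) :
    volume (interior (Idy q.1 q.2)) = ENNReal.ofReal (2 ^ (-q.1)) := by
  rw [interior_Idy, Real.volume_Ioo, add_sub_cancel_left]

theorem interior_Idy_subset_ball {q : ℤ × ℤ} {ρ₀ ρ : ℤ} {x y : ℝ} (hρ₀ : ρ₀ ≤ ρ) (hρ : ρ ≤ q.1)
    (hy : y ∈ ball (dyadicLeft q) (2 ^ (-ρ)) ∩ ball x (2 ^ (-ρ₀))) :
    interior (Idy q.1 q.2) ⊆ ball x (3 * 2 ^ (-ρ₀)) := by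
  have h₁ : (2 : ℝ) ^ (-q.1) ≤ 2 ^ (-ρ₀) := zpow_le_zpow_right₀ one_le_two (by omega)
  have h₂ : (2 : ℝ) ^ (-ρ) ≤ 2 ^ (-ρ₀) := zpow_le_zpow_right₀ one_le_two (by omega)
  obtain ⟨hya, hyx⟩ := hy
  intro z hz
  rw [interior_Idy] at hz
  rw [mem_ball, Real.dist_eq, abs_sub_lt_iff] at hya hyx ⊢
  constructor <;> linarith [hz.1, hz.2]

theorem tsum_volume_interior_Idy_inter_le {S : Set (ℤ × ℤ)}
    (hS : S.PairwiseDisjoint fun q => interior (Idy q.1 q.2))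
    (U : Set ℝ) : ∑' q : S, volume (interior (Idy q.1.1 q.1.2) ∩ U) ≤ volume U := by
  have hm : ∀ q : S, MeasurableSet (interior (Idy q.1.1 q.1.2)) :=
    fun _ => isOpen_interior.measurableSet
  calc ∑' q : S, volume (interior (Idy q.1.1 q.1.2) ∩ U)
      = ∑' q : S, volume.restrict U (interior (Idy q.1.1 q.1.2)) :=
        tsum_congr fun q => (Measure.restrict_apply (hm q)).symm
    _ ≤ volume.restrict U (⋃ q : S, interior (Idy q.1.1 q.1.2)) :=
        tsum_meas_le_meas_iUnion_of_disjoint _ hm ((pairwise_subtype_iff_pairwise_set S _).2 hS)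
    _ ≤ volume U := (measure_mono (subset_univ _)).trans_eq (Measure.restrict_apply_univ U)

theorem tsum_far_le {f : ℝ → ℝ≥0∞} {S : Set (ℤ × ℤ)} (hfm : Measurable f)
    (hf : ∀ ⦃u v : ℝ⦄, |u| ≤ |v| → f v ≤ f u)
    (hS : S.PairwiseDisjoint fun q => interior (Idy q.1 q.2)) (hr : ∀ q ∈ S, 0 ≤ q.1) (t : ℝ) :
    ∑' q : S, (if 1 ≤ |t - dyadicLeft q| then
      ENNReal.ofReal (2 ^ (4 - q.1.1)) * f (t - dyadicLeft q) else 0) ≤ 32 * ∫⁻ s, f s := by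
  have hterm : ∀ q : S, (if 1 ≤ |t - dyadicLeft q| then
      ENNReal.ofReal (2 ^ (4 - q.1.1)) * f (t - dyadicLeft q) else 0) ≤
      16 * ∫⁻ s in interior (Idy q.1.1 q.1.2), f ((t - s) / 2) := by
    intro q
    split_ifs with hfar
    swap
    · exact zero_le
    have hlen : (2 : ℝ) ^ (-q.1.1) ≤ 1 := zpow_le_one_of_nonpos₀ one_le_two (by linarith [hr q q.2])
    -- for `s ∈ I_q` we have `|t - s| ≤ |t - a_q| + 1 ≤ 2 |t - a_q|`
    have hpt : ∀ s ∈ interior (Idy q.1.1 q.1.2), f (t - dyadicLeft q) ≤ f ((t - s) / 2) := by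
      intro s hs
      rw [interior_Idy] at hs
      refine hf ?_
      rw [abs_div, abs_two, div_le_iff₀ two_pos]
      have has : |dyadicLeft q - s| ≤ 1 := by
        rw [abs_sub_comm, abs_of_pos (by linarith [hs.1])]; linarith [hs.2]
      linarith [abs_sub_le t (dyadicLeft q) s]
    calc ENNReal.ofReal (2 ^ (4 - q.1.1)) * f (t - dyadicLeft q)
        = 16 * ∫⁻ _ in interior (Idy q.1.1 q.1.2), f (t - dyadicLeft q) := by
          rw [setLIntegral_const, volume_interior_Idy, show (4 : ℤ) - q.1.1 = 4 + -q.1.1 by ring,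
            zpow_add₀ two_ne_zero, ENNReal.ofReal_mul (by norm_num)]
          norm_num
          ring
      _ ≤ 16 * ∫⁻ s in interior (Idy q.1.1 q.1.2), f ((t - s) / 2) := by
          gcongr 16 * ?_
          exact setLIntegral_mono' isOpen_interior.measurableSet hpt
  calc _ ≤ ∑' q : S, 16 * ∫⁻ s in interior (Idy q.1.1 q.1.2), f ((t - s) / 2) :=
        ENNReal.tsum_le_tsum hterm
    _ ≤ 16 * ∫⁻ s, f ((t - s) / 2) := by
        rw [ENNReal.tsum_mul_left]
        gcongr
        exact tsum_setLIntegral_le_lintegral (fun _ => isOpen_interior.measurableSet)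
          ((pairwise_subtype_iff_pairwise_set S _).2 hS) _
    _ = 32 * ∫⁻ s, f s := by rw [lintegral_comp_sub_div_two hfm]; ring

section Layers

variable (c : ℤ → ℝ≥0∞) (S : Set (ℤ × ℤ))

def layer (ρ : ℤ) (t : ℝ) : ℝ≥0∞ :=
  ∑' q : S, (ball (dyadicLeft q) (2 ^ (-ρ))).indicator (fun _ => c (q.1.1 - ρ)) t

def layerTail (ρ₀ : ℤ) (t : ℝ) : ℝ≥0∞ := ∑' ρ : Ici ρ₀, layer c S ρ t

theorem measurable_layer (ρ : ℤ) : Measurable (layer c S ρ) :=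
  Measurable.tsum fun _ => measurable_const.indicator measurableSet_ball

theorem measurable_layerTail (ρ₀ : ℤ) : Measurable (layerTail c S ρ₀) :=
  Measurable.tsum fun _ => measurable_layer c S _

theorem layerTail_antitone : Antitone (layerTail c S) := fun _ _ h t =>
  ENNReal.tsum_mono_subtype (layer c S · t) (Ici_subset_Ici.2 h)

theorem layerTail_pow_succ_le (ρ₀ : ℤ) (t : ℝ) (m : ℕ) :
    layerTail c S ρ₀ t ^ (m + 1) ≤
      2 ^ m * ∑' ρ : Ici ρ₀, layer c S ρ t * layerTail c S ρ t ^ m := by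
  have htail : ∀ ρ ∈ Ici ρ₀,
      ∑' ρ' : Ici ρ, (Ici ρ₀).indicator (layer c S · t) ρ' = layerTail c S ρ t :=
    fun ρ hρ => tsum_congr fun ρ' => indicator_of_mem (mem_Ici.2 (le_trans hρ ρ'.2)) _
  calc layerTail c S ρ₀ t ^ (m + 1) = (∑' ρ, (Ici ρ₀).indicator (layer c S · t) ρ) ^ (m + 1) := by
        rw [layerTail]; exact congrArg (· ^ (m + 1)) (tsum_subtype (Ici ρ₀) (layer c S · t))
    _ ≤ 2 ^ m * ∑' ρ, (Ici ρ₀).indicator (layer c S · t) ρ *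
          (∑' ρ' : Ici ρ, (Ici ρ₀).indicator (layer c S · t) ρ') ^ m :=
        tsum_pow_succ_le_two_pow_mul_tsum_mul_tail_pow _ m
    _ = 2 ^ m * ∑' ρ : Ici ρ₀, layer c S ρ t * layerTail c S ρ t ^ m := by
        rw [tsum_subtype (Ici ρ₀) fun ρ => layer c S ρ t * layerTail c S ρ t ^ m]
        congr 1
        refine tsum_congr fun ρ => ?_
        by_cases hρ : ρ ∈ Ici ρ₀
        · rw [indicator_of_mem hρ, indicator_of_mem hρ, htail ρ hρ]
        · rw [indicator_of_notMem hρ, indicator_of_notMem hρ, zero_mul]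

theorem setLIntegral_layer_mul {g : ℝ → ℝ≥0∞} (hg : Measurable g) (ρ : ℤ) (B : Set ℝ) :
    ∫⁻ t in B, layer c S ρ t * g t =
      ∑' q : S, c (q.1.1 - ρ) * ∫⁻ t in ball (dyadicLeft q) (2 ^ (-ρ)) ∩ B, g t := by
  simp only [layer, ← ENNReal.tsum_mul_right, ← indicator_mul_left]
  rw [lintegral_tsum fun q => ((hg.const_mul _).indicator measurableSet_ball).aemeasurable]
  simp only [setLIntegral_indicator measurableSet_ball, lintegral_const_mul _ hg]

variable {c S}

theorem mul_setLIntegral_ball_inter_le (hc : ∀ d < 0, c d = 0) {j : ℕ} {K : ℝ≥0∞}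
    (hK : ∀ ρ x, ∫⁻ t in ball x (2 ^ (-ρ)), layerTail c S ρ t ^ j ≤ K * ENNReal.ofReal (2 ^ (-ρ)))
    {ρ₀ ρ : ℤ} (hρ : ρ₀ ≤ ρ) (q : ℤ × ℤ) (x : ℝ) :
    c (q.1 - ρ) * ∫⁻ t in ball (dyadicLeft q) (2 ^ (-ρ)) ∩ ball x (2 ^ (-ρ₀)),
        layerTail c S ρ t ^ j ≤
      K * (c (q.1 - ρ) * ENNReal.ofReal (2 ^ (q.1 - ρ))) *
        volume (interior (Idy q.1 q.2) ∩ ball x (3 * 2 ^ (-ρ₀))) := by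
  rcases lt_or_ge q.1 ρ with hq | hq
  · simp [hc _ (sub_neg.2 hq)]
  rcases (ball (dyadicLeft q) (2 ^ (-ρ)) ∩ ball x (2 ^ (-ρ₀))).eq_empty_or_nonempty
    with hV | ⟨y, hy⟩
  · rw [hV]; simp
  rw [inter_eq_left.2 (interior_Idy_subset_ball hρ hq hy), volume_interior_Idy]
  have hscale : ENNReal.ofReal (2 ^ (-ρ)) =
      ENNReal.ofReal (2 ^ (q.1 - ρ)) * ENNReal.ofReal (2 ^ (-q.1)) := by
    rw [← ENNReal.ofReal_mul (by positivity), ← zpow_add₀ two_ne_zero]; ring_nf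
  calc c (q.1 - ρ) * ∫⁻ t in ball (dyadicLeft q) (2 ^ (-ρ)) ∩ ball x (2 ^ (-ρ₀)),
        layerTail c S ρ t ^ j
      ≤ c (q.1 - ρ) * (K * ENNReal.ofReal (2 ^ (-ρ))) := by
        gcongr
        exact (lintegral_mono_set inter_subset_left).trans (hK ρ _)
    _ = _ := by rw [hscale]; ring

theorem tsum_tsum_coeff_mul_volume_le
    (hS : S.PairwiseDisjoint fun q => interior (Idy q.1 q.2))
    {L : ℝ≥0∞} (hL : ∑' d, c d * ENNReal.ofReal (2 ^ d) ≤ L) (K : ℝ≥0∞) (U : Set ℝ) :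
    ∑' ρ, ∑' q : S, K * (c (q.1.1 - ρ) * ENNReal.ofReal (2 ^ (q.1.1 - ρ))) *
        volume (interior (Idy q.1.1 q.1.2) ∩ U) ≤ K * (L * volume U) := by
  have hcoef : ∀ r : ℤ, ∑' ρ, c (r - ρ) * ENNReal.ofReal (2 ^ (r - ρ)) =
      ∑' d, c d * ENNReal.ofReal (2 ^ d) :=
    fun r => (Equiv.subLeft r).tsum_eq fun d => c d * ENNReal.ofReal (2 ^ d)
  calc _ = K * ((∑' d, c d * ENNReal.ofReal (2 ^ d)) *
        ∑' q : S, volume (interior (Idy q.1.1 q.1.2) ∩ U)) := by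
        rw [ENNReal.tsum_comm]
        simp only [ENNReal.tsum_mul_right, ENNReal.tsum_mul_left, hcoef]
        rw [mul_assoc]
    _ ≤ K * (L * volume U) := by
        gcongr
        exact tsum_volume_interior_Idy_inter_le hS U

theorem setLIntegral_ball_layerTail_pow_succ_le
    (hS : S.PairwiseDisjoint fun q => interior (Idy q.1 q.2)) (hc : ∀ d < 0, c d = 0)
    {L : ℝ≥0∞} (hL : ∑' d, c d * ENNReal.ofReal (2 ^ d) ≤ L) {j : ℕ} {K : ℝ≥0∞}
    (hK : ∀ ρ x, ∫⁻ t in ball x (2 ^ (-ρ)), layerTail c S ρ t ^ j ≤ K * ENNReal.ofReal (2 ^ (-ρ)))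
    (ρ₀ : ℤ) (x : ℝ) :
    ∫⁻ t in ball x (2 ^ (-ρ₀)), layerTail c S ρ₀ t ^ (j + 1) ≤
      2 ^ j * (6 * L * K) * ENNReal.ofReal (2 ^ (-ρ₀)) := by
  set E : ℤ × ℤ → ℝ≥0∞ := fun q => volume (interior (Idy q.1 q.2) ∩ ball x (3 * 2 ^ (-ρ₀)))
  have hmeas : ∀ ρ, Measurable fun t => layer c S ρ t * layerTail c S ρ t ^ j :=
    fun ρ => (measurable_layer c S ρ).mul ((measurable_layerTail c S ρ).pow_const j)
  calc ∫⁻ t in ball x (2 ^ (-ρ₀)), layerTail c S ρ₀ t ^ (j + 1)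
      ≤ ∫⁻ t in ball x (2 ^ (-ρ₀)), 2 ^ j * ∑' ρ : Ici ρ₀, layer c S ρ t * layerTail c S ρ t ^ j :=
        lintegral_mono fun t => layerTail_pow_succ_le c S ρ₀ t j
    _ = 2 ^ j * ∑' ρ : Ici ρ₀, ∑' q : S, c (q.1.1 - ρ) *
          ∫⁻ t in ball (dyadicLeft q) (2 ^ (-(ρ : ℤ))) ∩ ball x (2 ^ (-ρ₀)),
            layerTail c S ρ t ^ j := by
        rw [lintegral_const_mul _ (Measurable.tsum fun ρ : Ici ρ₀ => hmeas ρ),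
          lintegral_tsum fun ρ : Ici ρ₀ => (hmeas ρ).aemeasurable]
        simp only [setLIntegral_layer_mul c S ((measurable_layerTail c S _).pow_const j)]
    _ ≤ 2 ^ j * ∑' ρ : Ici ρ₀, ∑' q : S,
          K * (c (q.1.1 - ρ) * ENNReal.ofReal (2 ^ (q.1.1 - ρ))) * E q := by
        gcongr 2 ^ j * ?_
        exact ENNReal.tsum_le_tsum fun ρ => ENNReal.tsum_le_tsum fun q =>
          mul_setLIntegral_ball_inter_le hc hK ρ.2 q x
    _ ≤ 2 ^ j * ∑' ρ, ∑' q : S, K * (c (q.1.1 - ρ) * ENNReal.ofReal (2 ^ (q.1.1 - ρ))) * E q := by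
        gcongr
        exact ENNReal.tsum_comp_le_tsum_of_injective Subtype.val_injective
          (fun ρ => ∑' q : S, K * (c (q.1.1 - ρ) * ENNReal.ofReal (2 ^ (q.1.1 - ρ))) * E q)
    _ ≤ 2 ^ j * (K * (L * volume (ball x (3 * 2 ^ (-ρ₀))))) := by
        gcongr
        exact tsum_tsum_coeff_mul_volume_le hS hL K _
    _ = 2 ^ j * (6 * L * K) * ENNReal.ofReal (2 ^ (-ρ₀)) := by
        rw [Real.volume_ball, ← mul_assoc, ENNReal.ofReal_mul (by norm_num)]
        norm_num
        ring

end Layers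

theorem exists_setLIntegral_ball_layerTail_pow_le {c : ℤ → ℝ≥0∞} (hc : ∀ d < 0, c d = 0)
    {L : ℝ≥0∞} (hL : ∑' d, c d * ENNReal.ofReal (2 ^ d) ≤ L) (hL' : L ≠ ∞) (j : ℕ) :
    ∃ K ≠ ∞, ∀ S : Set (ℤ × ℤ), S.PairwiseDisjoint (fun q => interior (Idy q.1 q.2)) →
      ∀ ρ x, ∫⁻ t in ball x (2 ^ (-ρ)), layerTail c S ρ t ^ j ≤ K * ENNReal.ofReal (2 ^ (-ρ)) := by
  induction j with
  | zero =>
    refine ⟨2, ENNReal.ofNat_ne_top, fun S _ ρ x => ?_⟩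
    simp only [pow_zero]
    rw [setLIntegral_one, Real.volume_ball, ENNReal.ofReal_mul zero_le_two]
    norm_num
  | succ j ih =>
    obtain ⟨K, hK, h⟩ := ih
    exact ⟨2 ^ j * (6 * L * K), by finiteness,
      fun S hS => setLIntegral_ball_layerTail_pow_succ_le hS hc hL (h S hS)⟩

theorem le_far_add_tsum_layer {f : ℝ → ℝ≥0∞} (hf : ∀ ⦃u v : ℝ⦄, |u| ≤ |v| → f v ≤ f u)
    (hdecay : ∀ (j : ℕ) (x : ℝ), 1 ≤ |x| →
      f (2 ^ j * x) ≤ ENNReal.ofReal (2 ^ ((4 : ℤ) - j)) * f x)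
    {q : ℤ × ℤ} (hq : 0 ≤ q.1) (t : ℝ) :
    f (2 ^ q.1 * t - q.2) ≤
      (if 1 ≤ |t - dyadicLeft q| then
        ENNReal.ofReal (2 ^ (4 - q.1)) * f (t - dyadicLeft q) else 0) +
      ∑' ρ : Ici (0 : ℤ), (ball (dyadicLeft q) (2 ^ (-(ρ : ℤ)))).indicator
        (fun _ => scaleCoeff f (q.1 - ρ)) t := by
  have harg : (2 : ℝ) ^ q.1 * t - q.2 = 2 ^ q.1 * (t - dyadicLeft q) := by
    rw [dyadicLeft, mul_sub, ← mul_assoc, ← zpow_add₀ two_ne_zero, add_neg_cancel, zpow_zero,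
      one_mul]
  rw [harg]
  split_ifs with hfar
  · refine le_add_right ?_
    obtain ⟨n, hn⟩ := Int.eq_ofNat_of_zero_le hq
    rw [hn, zpow_natCast]
    exact hdecay n _ hfar
  · refine le_add_left ?_
    have hpos : (0 : ℝ) < 2 ^ q.1 := zpow_pos two_pos _
    have habs : |2 ^ q.1 * (t - dyadicLeft q)| = 2 ^ q.1 * |t - dyadicLeft q| := by
      rw [abs_mul, abs_of_pos hpos]
    obtain ⟨d, -, hlt, hmin, hle⟩ := exists_dyadic_shell hf (2 ^ q.1 * (t - dyadicLeft q))
    have hdq : d ≤ q.1 :=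
      hmin q.1 hq (by rw [habs]; exact mul_lt_of_lt_one_right hpos (not_le.1 hfar))
    have hmem : t ∈ ball (dyadicLeft q) (2 ^ (-(q.1 - d))) := by
      rw [mem_ball, Real.dist_eq, neg_sub, zpow_sub₀ two_ne_zero, lt_div_iff₀ hpos, mul_comm]
      rwa [habs] at hlt
    calc f (2 ^ q.1 * (t - dyadicLeft q)) ≤ scaleCoeff f d := hle
      _ = (ball (dyadicLeft q) (2 ^ (-(q.1 - d)))).indicator
            (fun _ => scaleCoeff f (q.1 - (q.1 - d))) t := by
          rw [indicator_of_mem hmem, sub_sub_cancel]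
      _ ≤ _ := ENNReal.le_tsum (⟨q.1 - d, by simpa using hdq⟩ : Ici (0 : ℤ))

theorem tsum_le_far_add_layerTail {f : ℝ → ℝ≥0∞} (hfm : Measurable f)
    (hf : ∀ ⦃u v : ℝ⦄, |u| ≤ |v| → f v ≤ f u)
    (hdecay : ∀ (j : ℕ) (x : ℝ), 1 ≤ |x| →
      f (2 ^ j * x) ≤ ENNReal.ofReal (2 ^ ((4 : ℤ) - j)) * f x)
    {S : Set (ℤ × ℤ)} (hS : S.PairwiseDisjoint fun q => interior (Idy q.1 q.2))
    (hr : ∀ q ∈ S, 0 ≤ q.1) (t : ℝ) :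
    ∑' q : S, f (2 ^ q.1.1 * t - q.1.2) ≤ 32 * (∫⁻ s, f s) + layerTail (scaleCoeff f) S 0 t := by
  calc ∑' q : S, f (2 ^ q.1.1 * t - q.1.2)
      ≤ ∑' q : S, ((if 1 ≤ |t - dyadicLeft q| then
          ENNReal.ofReal (2 ^ (4 - q.1.1)) * f (t - dyadicLeft q) else 0) +
        ∑' ρ : Ici (0 : ℤ), (ball (dyadicLeft q) (2 ^ (-(ρ : ℤ)))).indicator
          (fun _ => scaleCoeff f (q.1.1 - ρ)) t) :=
        ENNReal.tsum_le_tsum fun q => le_far_add_tsum_layer hf hdecay (hr q q.2) t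
    _ ≤ 32 * (∫⁻ s, f s) + layerTail (scaleCoeff f) S 0 t := by
        rw [ENNReal.tsum_add, ENNReal.tsum_comm (f := fun (q : S) (ρ : Ici (0 : ℤ)) => _)]
        exact add_le_add (tsum_far_le hfm hf hS hr t) le_rfl

theorem lintegral_mul_pow_le_of_le_const_add {α : Type*} [MeasurableSpace α] {μ : Measure α}
    {f g h : α → ℝ≥0∞} (hf : Measurable f) {a : ℝ≥0∞} (hg : ∀ t, g t ≤ a + h t) (k : ℕ) :
    ∫⁻ t, f t * g t ^ k ∂μ ≤ 2 ^ k * (a ^ k * (∫⁻ t, f t ∂μ) + ∫⁻ t, f t * h t ^ k ∂μ) := by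
  calc ∫⁻ t, f t * g t ^ k ∂μ ≤ ∫⁻ t, 2 ^ k * (a ^ k * f t + f t * h t ^ k) ∂μ := by
        refine lintegral_mono fun t => ?_
        calc f t * g t ^ k ≤ f t * (2 ^ k * (a ^ k + h t ^ k)) := by
              gcongr
              exact (pow_le_pow_left' (hg t) k).trans (ENNReal.add_pow_le_two_pow_mul _ _ k)
          _ = 2 ^ k * (a ^ k * f t + f t * h t ^ k) := by ring
    _ = 2 ^ k * (a ^ k * (∫⁻ t, f t ∂μ) + ∫⁻ t, f t * h t ^ k ∂μ) := by
        rw [lintegral_const_mul' _ _ (by finiteness), lintegral_add_left (hf.const_mul _),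
          lintegral_const_mul _ hf]

theorem lintegral_mul_layerTail_pow_le {f : ℝ → ℝ≥0∞} (hf : ∀ ⦃u v : ℝ⦄, |u| ≤ |v| → f v ≤ f u)
    {S : Set (ℤ × ℤ)} {k : ℕ} {K : ℝ≥0∞}
    (hK : ∀ ρ x, ∫⁻ t in ball x (2 ^ (-ρ)), layerTail (scaleCoeff f) S ρ t ^ k ≤
      K * ENNReal.ofReal (2 ^ (-ρ))) :
    ∫⁻ t, f t * layerTail (scaleCoeff f) S 0 t ^ k ≤
      K * ∑' d, scaleCoeff f d * ENNReal.ofReal (2 ^ d) := by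
  refine lintegral_mul_le_of_setLIntegral_ball_le
    ((measurable_layerTail _ S 0).pow_const k) (fun t => ?_) fun d hd => ?_
  · obtain ⟨d, hd, hlt, -, hle⟩ := exists_dyadic_shell hf t
    exact ⟨d, hd, hlt, hle⟩
  · calc ∫⁻ t in ball 0 (2 ^ d), layerTail (scaleCoeff f) S 0 t ^ k
        ≤ ∫⁻ t in ball 0 (2 ^ (-(-d))), layerTail (scaleCoeff f) S (-d) t ^ k := by
          rw [neg_neg]
          gcongr with t
          exact layerTail_antitone _ S (by omega) t
      _ ≤ K * ENNReal.ofReal (2 ^ d) := by simpa using hK (-d) 0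

theorem exists_lintegral_mul_tsum_pow_le {f : ℝ → ℝ≥0∞} (hfm : Measurable f)
    (hf : ∀ ⦃u v : ℝ⦄, |u| ≤ |v| → f v ≤ f u)
    (hdecay : ∀ (j : ℕ) (x : ℝ), 1 ≤ |x| →
      f (2 ^ j * x) ≤ ENNReal.ofReal (2 ^ ((4 : ℤ) - j)) * f x)
    (hf0 : f 0 ≠ ∞) (hfi : ∫⁻ s, f s ≠ ∞) (k : ℕ) :
    ∃ C ≠ ∞, ∀ S : Set (ℤ × ℤ), S.PairwiseDisjoint (fun q => interior (Idy q.1 q.2)) →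
      (∀ q ∈ S, 0 ≤ q.1) → ∫⁻ t, f t * (∑' q : S, f (2 ^ q.1.1 * t - q.1.2)) ^ k ≤ C := by
  have hL := tsum_scaleCoeff_mul_le (f := f) fun u hu v hv h =>
    hf (by rwa [abs_of_nonneg (mem_Ici.1 hu), abs_of_nonneg (mem_Ici.1 hv)])
  obtain ⟨K, hK, hball⟩ := exists_setLIntegral_ball_layerTail_pow_le
    (fun d hd => scaleCoeff_of_neg f hd) hL (by finiteness) k
  refine ⟨2 ^ k * ((32 * ∫⁻ s, f s) ^ k * (∫⁻ s, f s) + K * (f 0 + 4 * ∫⁻ s, f s)),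
    by finiteness, fun S hS hr => ?_⟩
  calc ∫⁻ t, f t * (∑' q : S, f (2 ^ q.1.1 * t - q.1.2)) ^ k
      ≤ 2 ^ k * ((32 * ∫⁻ s, f s) ^ k * (∫⁻ s, f s) +
          ∫⁻ t, f t * layerTail (scaleCoeff f) S 0 t ^ k) :=
        lintegral_mul_pow_le_of_le_const_add hfm
          (tsum_le_far_add_layerTail hfm hf hdecay hS hr) k
    _ ≤ _ := by
        gcongr
        exact (lintegral_mul_layerTail_pow_le hf (hball S hS)).trans (by gcongr)

theorem BetaHyp.apply_abs {β : ℝ → ℝ} (hβ : BetaHyp β) (x : ℝ) : β |x| = β x := by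
  rcases abs_choice x with hx | hx <;> rw [hx]
  exact hβ.2.2.1 x

theorem BetaHyp.abs_antitone {β : ℝ → ℝ} (hβ : BetaHyp β) {u v : ℝ} (h : |u| ≤ |v|) :
    β v ≤ β u := by
  rw [← hβ.apply_abs u, ← hβ.apply_abs v]
  exact hβ.2.2.2.2.1 (abs_nonneg u) (abs_nonneg v) h

theorem BetaHyp.measurable {β : ℝ → ℝ} (hβ : BetaHyp β) : Measurable β := by
  have hmono : Antitone fun y : ℝ => β (max y 0) := fun y z h =>
    hβ.2.2.2.2.1 (le_max_right y 0) (le_max_right z 0) (max_le_max h le_rfl)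
  convert hmono.measurable.comp measurable_abs using 1
  ext x
  simp [hβ.apply_abs]

theorem BetaHyp.ofReal_two_pow_mul_le {β : ℝ → ℝ} (hβ : BetaHyp β) (j : ℕ) {x : ℝ}
    (hx : 1 ≤ |x|) :
    ENNReal.ofReal (β (2 ^ j * x)) ≤ ENNReal.ofReal (2 ^ ((4 : ℤ) - j)) * ENNReal.ofReal (β x) := by
  rw [← ENNReal.ofReal_mul (zpow_nonneg zero_le_two _)]
  exact ENNReal.ofReal_le_ofReal (hβ.2.2.2.2.2 j x hx)

/-- A uniform bound for the integrals
`∫ β(t) (Σ_{(r,l) ∈ S'} β(2^r t - l))^k dt` over all families `S'` of dyadic intervals with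
pairwise disjoint interiors and nonnegative scales `r ≥ 0`. -/
theorem beta_sum_integral_bound (β : ℝ → ℝ) (hβ : BetaHyp β) (k : ℕ) :
    ∃ C > (0 : ℝ), ∀ S' : Set (ℤ × ℤ),
      (S'.Pairwise fun q q' =>
        Disjoint (interior (Idy q.1 q.2)) (interior (Idy q'.1 q'.2))) →
      (∀ q ∈ S', 0 ≤ q.1) →
      ∫⁻ t, ENNReal.ofReal (β t) *
          (∑' (q : S'), ENNReal.ofReal (β ((2 : ℝ) ^ (q : ℤ × ℤ).1 * t - (q : ℤ × ℤ).2))) ^ k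
        ≤ ENNReal.ofReal C := by
  obtain ⟨C, hC, hbound⟩ := exists_lintegral_mul_tsum_pow_le hβ.measurable.ennreal_ofReal
    (fun _ _ h => ENNReal.ofReal_le_ofReal (hβ.abs_antitone h))
    (fun j _ hx => hβ.ofReal_two_pow_mul_le j hx) ENNReal.ofReal_ne_top
    hβ.2.2.2.1.lintegral_lt_top.ne k
  refine ⟨C.toReal + 1, by positivity, fun S hS hr => (hbound S hS hr).trans ?_⟩
  exact (ENNReal.le_ofReal_iff_toReal_le hC (by positivity)).2 (le_add_of_nonneg_right zero_le_one)

end
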